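/- Let η be a smooth solution of the uniformly compressing curve-shortening flow ∂_t η = L⁻² ∂_s(σ̃ ∂_s η), with |∂_s η| ≡ L(t), ∫₀¹ σ̃(t,s) ds = 1 and ∫₀¹ η(t,s) ds = 0. Then the L²-mass M(t) := (1/2)∫₀¹ |η(t,s)|² ds satisfies ∂_t M(t) = −1 for all t; consequently M(t) = M(0) − t and the flow becomes extinct at time t* = M(0). -/

import Mathlib

open Real MeasureTheory intervalIntegral

noncomputable section

/-- The `L²`-mass `M(t) = (1/2)∫|η|²` decays with constant speed `-1` along the
uniformly compressing curve-shortening flow, hence `M(t) = M(0) - t` and the flow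
becomes extinct at time `t* = M(0)`. -/
theorem stmt5 (d : ℕ)
    (η : ℝ → ℝ → EuclideanSpace ℝ (Fin d)) (σt : ℝ → ℝ → ℝ) (L : ℝ → ℝ)
    (hη : ContDiff ℝ (⊤ : ℕ∞) (fun p : ℝ × ℝ => η p.1 p.2))
    (hσt : ContDiff ℝ (⊤ : ℕ∞) (fun p : ℝ × ℝ => σt p.1 p.2))
    (hperη : ∀ t, Function.Periodic (η t) 1)
    (hperσ : ∀ t, Function.Periodic (σt t) 1)
    (hLpos : ∀ t, 0 < L t)
    (hspeed : ∀ t s, ‖deriv (η t) s‖ = L t)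
    (hflow : ∀ t s, deriv (fun u => η u s) t
        = ((L t) ^ 2)⁻¹ • deriv (fun r => σt t r • deriv (η t) r) s)
    (hmult : ∀ t s, deriv (deriv (σt t)) s
        - ((L t) ^ 2)⁻¹ * σt t s * ‖deriv (deriv (η t)) s‖ ^ 2
        = -((L t) ^ 2)⁻¹ * ∫ r in (0:ℝ)..1, σt t r * ‖deriv (deriv (η t)) r‖ ^ 2)
    (hσmean : ∀ t, (∫ s in (0:ℝ)..1, σt t s) = 1)
    (hmean : ∀ t, (∫ s in (0:ℝ)..1, η t s) = 0) :
    (∀ t, deriv (fun u => (1/2) * ∫ s in (0:ℝ)..1, ‖η u s‖ ^ 2) t = -1) ∧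
    (∀ t, (1/2) * (∫ s in (0:ℝ)..1, ‖η t s‖ ^ 2)
        = (1/2) * (∫ s in (0:ℝ)..1, ‖η 0 s‖ ^ 2) - t) := by
  classical
  set Fj : ℝ × ℝ → EuclideanSpace ℝ (Fin d) := fun p => η p.1 p.2 with hFjdef
  have hηdiff : Differentiable ℝ Fj := hη.differentiable (by simp)
  -- partial time derivative
  set ηu : ℝ × ℝ → EuclideanSpace ℝ (Fin d) := fun p => fderiv ℝ Fj p (1, 0) with hηudef
  have hηu_cont : Continuous ηu :=
    (hη.continuous_fderiv (by simp)).clm_apply continuous_const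
  have hpart : ∀ u s, HasDerivAt (fun v => η v s) (ηu (u, s)) u := by
    intro u s
    have h1 : HasDerivAt (fun v : ℝ => ((v, s) : ℝ × ℝ)) (1, 0) u :=
      (hasDerivAt_id u).prodMk (hasDerivAt_const u s)
    exact ((hηdiff (u, s)).hasFDerivAt.comp_hasDerivAt u h1)
  -- derivative of the integrand in time
  set G' : ℝ × ℝ → ℝ :=
    fun p => inner ℝ (Fj p) (ηu p) + inner ℝ (ηu p) (Fj p) with hG'def
  have hG'cont : Continuous G' :=
    ((hη.continuous).inner hηu_cont).add (hηu_cont.inner hη.continuous)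
  have hG : ∀ u s, HasDerivAt (fun v => ‖η v s‖ ^ 2) (G' (u, s)) u := by
    intro u s
    have := (hpart u s).inner ℝ (hpart u s)
    simp only [real_inner_self_eq_norm_sq] at this
    exact this
  -- key : HasDerivAt of the mass
  have key : ∀ t, HasDerivAt (fun u => (1/2) * ∫ s in (0:ℝ)..1, ‖η u s‖ ^ 2) (-1) t := by
    intro t
    -- bound on G' on a compact neighborhood
    obtain ⟨C, hC⟩ : ∃ C, ∀ p ∈ (Metric.closedBall t 1 ×ˢ Set.uIcc (0:ℝ) 1), ‖G' p‖ ≤ C := by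
      have hK : IsCompact (Metric.closedBall t 1 ×ˢ Set.uIcc (0:ℝ) 1) :=
        (isCompact_closedBall t 1).prod isCompact_uIcc
      exact hK.exists_bound_of_continuousOn hG'cont.continuousOn
    have hmain := intervalIntegral.hasDerivAt_integral_of_dominated_loc_of_deriv_le
      (F := fun u s => ‖η u s‖ ^ 2) (F' := fun u s => G' (u, s)) (x₀ := t)
      (a := (0:ℝ)) (b := 1) (bound := fun _ => C) (μ := volume) (Metric.ball_mem_nhds t one_pos)
      (Filter.Eventually.of_forall fun x =>
        (Continuous.aestronglyMeasurable
          ((hη.continuous.comp (continuous_const.prodMk continuous_id)).norm.pow 2)))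
      ((((hη.continuous.comp
          (continuous_const.prodMk continuous_id)).norm.pow 2)).continuousOn.intervalIntegrable)
      ((hG'cont.comp (continuous_const.prodMk continuous_id)).aestronglyMeasurable)
      (Filter.Eventually.of_forall fun s hs => fun x hx =>
        hC _ ⟨Metric.ball_subset_closedBall hx, Set.uIoc_subset_uIcc hs⟩)
      (_root_.intervalIntegrable_const)
      (Filter.Eventually.of_forall fun s _ => fun x _ => hG x s)
    have hDer := hmain.2
    -- compute the value of the integral ∫ G' (t, s)
    -- notation for the fixed time t
    have hηt : ContDiff ℝ (⊤ : ℕ∞) (η t) :=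
      (hη.of_le (by simp)).comp (contDiff_const.prodMk contDiff_id)
    have hηt' : ContDiff ℝ (⊤ : ℕ∞) (deriv (η t)) := (contDiff_infty_iff_deriv.mp hηt).2
    have hσs : ContDiff ℝ (⊤ : ℕ∞) (σt t) :=
      (hσt.of_le (by simp)).comp (contDiff_const.prodMk contDiff_id)
    have hw : ContDiff ℝ (⊤ : ℕ∞) (fun r => σt t r • deriv (η t) r) := hσs.smul hηt'
    set D : ℝ → EuclideanSpace ℝ (Fin d) :=
      fun s => deriv (fun r => σt t r • deriv (η t) r) s with hDdef
    have hD : ContDiff ℝ (⊤ : ℕ∞) D := (contDiff_infty_iff_deriv.mp hw).2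
    set g : ℝ → ℝ := fun s => inner ℝ (η t s) (σt t s • deriv (η t) s) with hgdef
    have hg' : ∀ s, HasDerivAt g (σt t s * L t ^ 2 + inner ℝ (η t s) (D s)) s := by
      intro s
      have h1 : HasDerivAt (η t) (deriv (η t) s) s :=
        (hηt.differentiable (by simp) s).hasDerivAt
      have h2 : HasDerivAt (fun r => σt t r • deriv (η t) r) (D s) s :=
        (hw.differentiable (by simp) s).hasDerivAt
      have h3 := h1.inner ℝ h2
      have h4 : (inner ℝ (deriv (η t) s) (σt t s • deriv (η t) s) : ℝ)
          = σt t s * L t ^ 2 := by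
        rw [real_inner_smul_right, real_inner_self_eq_norm_sq, hspeed]
      rw [h4] at h3
      simpa [add_comm] using h3
    have hDcont : Continuous D := hD.continuous
    have hgI : IntervalIntegrable (fun s => σt t s * L t ^ 2 + inner ℝ (η t s) (D s))
        volume 0 1 := by
      apply ContinuousOn.intervalIntegrable
      apply Continuous.continuousOn
      exact ((hσs.continuous.mul continuous_const).add (hηt.continuous.inner hDcont))
    have hftc : (∫ s in (0:ℝ)..1, (σt t s * L t ^ 2 + inner ℝ (η t s) (D s))) = g 1 - g 0 :=
      intervalIntegral.integral_eq_sub_of_hasDerivAt (fun s _ => hg' s) hgI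
    have hper1 : η t 1 = η t 0 := by simpa using hperη t 0
    have hper2 : σt t 1 = σt t 0 := by simpa using hperσ t 0
    have hper3 : deriv (η t) 1 = deriv (η t) 0 := by
      have : deriv (fun x => η t (x + 1)) 0 = deriv (η t) (0 + 1) := deriv_comp_add_const (η t) 1 0
      have he : (fun x => η t (x + 1)) = η t := funext fun x => hperη t x
      rw [he] at this
      simpa using this.symm
    have hg10 : g 1 - g 0 = 0 := by simp [hgdef, hper1, hper2, hper3]
    have hsplit : (∫ s in (0:ℝ)..1, (σt t s * L t ^ 2 + inner ℝ (η t s) (D s)))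
        = (∫ s in (0:ℝ)..1, σt t s * L t ^ 2) + ∫ s in (0:ℝ)..1, (inner ℝ (η t s) (D s) : ℝ) := by
      apply intervalIntegral.integral_add
      · apply ContinuousOn.intervalIntegrable
        exact (hσs.continuous.mul continuous_const).continuousOn
      · apply ContinuousOn.intervalIntegrable
        exact (hηt.continuous.inner hDcont).continuousOn
    have hσint : (∫ s in (0:ℝ)..1, σt t s * L t ^ 2) = L t ^ 2 := by
      rw [intervalIntegral.integral_mul_const, hσmean t, one_mul]
    have hIBP : (∫ s in (0:ℝ)..1, (inner ℝ (η t s) (D s) : ℝ)) = -(L t ^ 2) := by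
      have := hftc
      rw [hsplit, hσint, hg10] at this
      linarith
    -- identify ηu (t, s) with the flow
    have hηuflow : ∀ s, ηu (t, s) = (L t ^ 2)⁻¹ • D s := by
      intro s
      have := (hpart t s).deriv
      rw [← this]
      exact hflow t s
    have hGval : ∀ s, G' (t, s) = 2 * ((L t ^ 2)⁻¹ * (inner ℝ (η t s) (D s) : ℝ)) := by
      intro s
      simp only [hG'def, hηuflow s, real_inner_smul_right, real_inner_smul_left]
      rw [real_inner_comm (D s) (η t s)]
      ring
    have hint : (∫ s in (0:ℝ)..1, G' (t, s)) = -2 := by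
      rw [intervalIntegral.integral_congr (g := fun s => 2 * ((L t ^ 2)⁻¹ * (inner ℝ (η t s) (D s) : ℝ))) (fun s _ => hGval s)]
      rw [intervalIntegral.integral_const_mul, intervalIntegral.integral_const_mul, hIBP]
      have hL : L t ^ 2 ≠ 0 := pow_ne_zero 2 (hLpos t).ne'
      field_simp
      rw [div_self (hLpos t).ne']
    rw [hint] at hDer
    have := hDer.const_mul (1/2 : ℝ)
    norm_num at this
    convert this using 2
  constructor
  · intro t; exact (key t).deriv
  · intro t
    set M : ℝ → ℝ := fun u => (1/2) * ∫ s in (0:ℝ)..1, ‖η u s‖ ^ 2 with hM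
    have hN : ∀ u, HasDerivAt (fun v => M v + v) 0 u := by
      intro u
      have := (key u).add (hasDerivAt_id u)
      rw [show (-1:ℝ) + 1 = 0 by norm_num] at this
      exact this
    have : M t + t = M 0 + 0 :=
      is_const_of_deriv_eq_zero (fun u => (hN u).differentiableAt)
        (fun u => (hN u).deriv) t 0
    simp only [hM] at this ⊢
    linarith
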